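/- For every integer d ≥ 1, the maximum number of strings in S^d such that every two of them are at distance exactly one equals d+1; that is, n(1,d) = d+1. -/

import Mathlib

/-- The three-letter alphabet `S = {0, 1, ∗}`. -/
inductive Tern | zero | one | star
deriving DecidableEq

instance : Fintype Tern where
  elems := {Tern.zero, Tern.one, Tern.star}
  complete := by intro x; cases x <;> simp

/-- `clash x y` is true iff both `x, y ∈ {0,1}` and `x ≠ y`. -/
def clash : Tern → Tern → Bool
  | Tern.zero, Tern.one => true
  | Tern.one, Tern.zero => true
  | _, _ => false

/-- `dist u v`: the number of positions where both letters are binary and they differ. -/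
def dist {d : ℕ} (u v : Fin d → Tern) : ℕ :=
  (Finset.univ.filter (fun i => clash (u i) (v i))).card

/-- A `k`-neighborly code in `S^d`: every two distinct members `u, v`
satisfy `1 ≤ dist(u,v) ≤ k`. -/
def IsNeighborlyCode (k d : ℕ) (V : Finset (Fin d → Tern)) : Prop :=
  ∀ u ∈ V, ∀ v ∈ V, u ≠ v → 1 ≤ dist u v ∧ dist u v ≤ k

/-- `n(k,d)`: the maximum size of a `k`-neighborly code in `S^d`. -/
noncomputable def nMax (k d : ℕ) : ℕ :=
  sSup {m : ℕ | ∃ V : Finset (Fin d → Tern), IsNeighborlyCode k d V ∧ V.card = m}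


/-!
The strings `1^j 0 ∗^(d-j)`, `0 ≤ j ≤ d`, are pairwise at distance one, which gives `d + 1`.
Conversely, give each letter a weight (`1` on `0, 1`, `0` on `∗`) and a sign (`±1` on `1, 0`,
`0` on `∗`). Then `weight x * weight y = sign x * sign y + 2 [clash x y]`, so for strings
`⟪weight u, weight v⟫ = ⟪sign u, sign v⟫ + 2 dist(u, v)`. If all distances in a code are one and
`∑ g_u (sign u, 1) = 0`, expanding `‖∑ g_u weight u‖²` gives `-2 ∑ g_u²`, so `g = 0`: the vectors
`(sign u, 1) ∈ ℝ^(d+1)` are linearly independent.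
-/

open Finset Matrix

namespace Tern

def sign : Tern → ℝ
  | one => 1
  | zero => -1
  | star => 0

def weight : Tern → ℝ
  | star => 0
  | _ => 1

lemma weight_mul_weight (x y : Tern) :
    x.weight * y.weight = x.sign * y.sign + 2 * if clash x y then 1 else 0 := by
  cases x <;> cases y <;> norm_num [weight, sign, clash]

end Tern

lemma dist_self_eq_zero {d : ℕ} (u : Fin d → Tern) : dist u u = 0 := by
  have clash_self (x : Tern) : clash x x = false := by cases x <;> rfl
  simp [_root_.dist, clash_self]

lemma weight_dotProduct_weight {d : ℕ} (u v : Fin d → Tern) :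
    (Tern.weight ∘ u) ⬝ᵥ (Tern.weight ∘ v) =
      (Tern.sign ∘ u) ⬝ᵥ (Tern.sign ∘ v) + 2 * dist u v := by
  simp only [dotProduct, Function.comp_apply, Tern.weight_mul_weight, sum_add_distrib, ← mul_sum,
    sum_boole, _root_.dist]

lemma sum_smul_dotProduct_sum_smul {R ι κ : Type*} [CommSemiring R] [Fintype ι] [Fintype κ]
    (g : ι → R) (x : ι → κ → R) :
    (∑ a, g a • x a) ⬝ᵥ (∑ b, g b • x b) = ∑ a, ∑ b, g a * g b * (x a ⬝ᵥ x b) := by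
  simp_rw [sum_dotProduct, dotProduct_sum, smul_dotProduct, dotProduct_smul, smul_eq_mul, mul_assoc]

lemma linearIndependent_sign_one {d : ℕ} {ι : Type*} [Fintype ι] {u : ι → Fin d → Tern}
    (hu : Pairwise fun a b => dist (u a) (u b) = 1) :
    LinearIndependent ℝ fun a => (Tern.sign ∘ u a, (1 : ℝ)) := by
  classical
  rw [Fintype.linearIndependent_iff]
  intro g hg
  have hsign : ∑ a, g a • (Tern.sign ∘ u a) = 0 := by
    simpa [Prod.fst_sum] using congrArg Prod.fst hg
  have hsum : ∑ a, g a = 0 := by simpa [Prod.snd_sum] using congrArg Prod.snd hg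
  have hdist (a b : ι) : (dist (u a) (u b) : ℝ) = 1 - if a = b then 1 else 0 := by
    rcases eq_or_ne a b with rfl | hab
    · simp [dist_self_eq_zero]
    · simp [hu hab, hab]
  set w := ∑ a, g a • (Tern.weight ∘ u a)
  have hw : w ⬝ᵥ w = -2 * (g ⬝ᵥ g) := calc
    w ⬝ᵥ w = ∑ a, ∑ b, g a * g b * ((Tern.sign ∘ u a) ⬝ᵥ (Tern.sign ∘ u b))
        + 2 * ∑ a, ∑ b, g a * g b * (dist (u a) (u b) : ℝ) := by
      simp only [w, sum_smul_dotProduct_sum_smul, weight_dotProduct_weight, mul_sum,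
        ← sum_add_distrib]
      exact sum_congr rfl fun a _ => sum_congr rfl fun b _ => by ring
    _ = (∑ a, g a • (Tern.sign ∘ u a)) ⬝ᵥ (∑ a, g a • (Tern.sign ∘ u a))
        + 2 * ((∑ a, g a) * (∑ b, g b) - g ⬝ᵥ g) := by
      rw [sum_smul_dotProduct_sum_smul, sum_mul_sum]
      simp [hdist, mul_sub, sum_sub_distrib, dotProduct]
    _ = -2 * (g ⬝ᵥ g) := by rw [hsign, hsum]; simp
  have hg0 : g ⬝ᵥ g = 0 := by
    have := sum_nonneg fun a (_ : a ∈ univ) => mul_self_nonneg (w a)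
    have := sum_nonneg fun a (_ : a ∈ univ) => mul_self_nonneg (g a)
    simp only [dotProduct] at hw ⊢
    linarith
  simpa using congrFun (dotProduct_self_eq_zero.mp hg0)

lemma IsNeighborlyCode.card_le {d : ℕ} {V : Finset (Fin d → Tern)} (hV : IsNeighborlyCode 1 d V) :
    #V ≤ d + 1 := by
  have hu : Pairwise fun a b : V => dist (a : Fin d → Tern) b = 1 := fun a b hab =>
    have h := hV a a.2 b b.2 (Subtype.coe_ne_coe.mpr hab)
    le_antisymm h.2 h.1
  simpa using (linearIndependent_sign_one hu).fintype_card_le_finrank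

def staircase (d : ℕ) (j : Fin (d + 1)) : Fin d → Tern := fun i =>
  if (i : ℕ) < j then Tern.one else if (i : ℕ) = j then Tern.zero else Tern.star

lemma dist_staircase {d : ℕ} {j k : Fin (d + 1)} (hjk : j ≠ k) :
    dist (staircase d j) (staircase d k) = 1 := by
  have hmin : min (j : ℕ) k < d := by omega
  rw [_root_.dist, card_eq_one]
  refine ⟨⟨min (j : ℕ) k, hmin⟩, ?_⟩
  ext i
  rw [mem_filter_univ]
  simp only [staircase, mem_singleton, Fin.ext_iff]
  have := Fin.val_ne_of_ne hjk
  split_ifs <;> simp [clash] <;> omega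

lemma staircase_injective (d : ℕ) : Function.Injective (staircase d) := fun j k h => by
  by_contra hjk
  simpa [h, dist_self_eq_zero] using dist_staircase hjk

lemma isNeighborlyCode_image_staircase (d : ℕ) :
    IsNeighborlyCode 1 d (univ.image (staircase d)) := by
  simp only [IsNeighborlyCode, mem_image, mem_univ, true_and]
  rintro _ ⟨j, rfl⟩ _ ⟨k, rfl⟩ hjk
  simp [dist_staircase (ne_of_apply_ne _ hjk)]

theorem n_one_eq_general (d : ℕ) : nMax 1 d = d + 1 := by
  have hmem : d + 1 ∈ {m | ∃ V, IsNeighborlyCode 1 d V ∧ #V = m} :=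
    ⟨_, isNeighborlyCode_image_staircase d, by
      simp [card_image_of_injective _ (staircase_injective d)]⟩
  have hle : d + 1 ∈ upperBounds {m | ∃ V, IsNeighborlyCode 1 d V ∧ #V = m} := by
    rintro _ ⟨V, hV, rfl⟩
    exact hV.card_le
  exact IsGreatest.csSup_eq ⟨hmem, hle⟩

/-- Zaks' theorem: for every `d ≥ 1`, the maximum number of strings in `S^d`,
every two of which are at distance exactly one, equals `d + 1`; i.e. `n(1,d) = d+1`. -/
theorem n_one_eq (d : ℕ) (hd : 1 ≤ d) : nMax 1 d = d + 1 :=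
  n_one_eq_general d
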